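/- Define a strict order on ℕ × ℕ by (c,d) < (a,b) iff c+d < a+b, or c+d = a+b and d < b. Let q be a power of 2 and n = 1 + 2g(a) + 4g(b). If ⌊b/q⌋ is odd, then the pair (c,d) with 1 + 2g(c) + 4g(d) = n + 4q² satisfies (c,d) < (a, b+q). -/

import Mathlib

/-!
The recursions say that `g` spreads the binary digits of `n` onto the even positions of a
base-2 expansion, so `g a + 2 * g b` interleaves the digits of `a` and `b`, and the theorem
concerns adding `2 * 4 ^ e`, i.e. one unit at digit `e` of `b`. The digits of `a` and `b` below
`e` are untouched, and once they are stripped off this is adding `2` to an interleaving with `b`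
odd. So a carry runs upwards, alternately through digits of `a` and of `b`. If it stops at the
next digit of `a`, the result is `(a + 2 ^ (e + 1), b - 2 ^ e)`, with the same sum as
`(a, b + 2 ^ e)` and a smaller second entry; if it runs further, the digits it cleared weigh at
least as much as the one it set, so `c + d ≤ a + b`.
-/

/-- `(c,d)` strictly precedes `(a,b)` in the Nicolas–Serre order. -/
def prec (c d a b : ℕ) : Prop := c + d < a + b ∨ (c + d = a + b ∧ d < b)

theorem prec_two_mul_add {c d a b : ℕ} (h : prec c d a b) (i j : ℕ) :
    prec (2 * c + i) (2 * d + j) (2 * a + i) (2 * b + j) := by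
  unfold prec at h ⊢
  omega

def interleave (g : ℕ → ℕ) (a b : ℕ) : ℕ := g a + 2 * g b

section Interleave

variable {g : ℕ → ℕ} (hge : ∀ n, g (2 * n) = 4 * g n)
  (hgo : ∀ n, g (2 * n + 1) = g (2 * n) + 1)
include hge hgo

theorem spread_eq (n : ℕ) : g n = n % 2 + 4 * g (n / 2) := by
  obtain ⟨k, rfl | rfl⟩ := Nat.even_or_odd' n
  · rw [hge, show 2 * k / 2 = k by omega]; omega
  · rw [hgo, hge, show (2 * k + 1) / 2 = k by omega]; omega

theorem interleave_eq (a b : ℕ) :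
    interleave g a b = a % 2 + 2 * (b % 2) + 4 * interleave g (a / 2) (b / 2) := by
  unfold interleave
  rw [spread_eq hge hgo a, spread_eq hge hgo b]
  ring

theorem interleave_injective {a b c d : ℕ} (h : interleave g a b = interleave g c d) :
    a = c ∧ b = d := by
  induction hn : a + b + c + d using Nat.strong_induction_on generalizing a b c d with
  | _ n ih =>
    have hab := interleave_eq hge hgo a b
    have hcd := interleave_eq hge hgo c d
    rcases Nat.eq_zero_or_pos n with rfl | hpos
    · omega
    obtain ⟨h₁, h₂⟩ : a / 2 = c / 2 ∧ b / 2 = d / 2 :=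
      ih (a / 2 + b / 2 + c / 2 + d / 2) (by omega) (by omega) rfl
    omega

theorem interleave_eq_succ_of_even {a b c d : ℕ} (ha : Even a)
    (h : interleave g c d = interleave g a b + 1) : c = a + 1 ∧ d = b := by
  have hab := interleave_eq hge hgo a b
  have hcd := interleave_eq hge hgo c d
  rw [Nat.even_iff] at ha
  obtain ⟨h₁, h₂⟩ : c / 2 = a / 2 ∧ d / 2 = b / 2 := interleave_injective hge hgo (by omega)
  omega

theorem add_le_add_of_interleave_eq_succ_of_odd {a b c d : ℕ} (ha : Odd a)
    (h : interleave g c d = interleave g a b + 1) : c + d ≤ a + b := by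
  induction a using Nat.strong_induction_on generalizing b c d with
  | _ a ih =>
    have hab := interleave_eq hge hgo a b
    have hcd := interleave_eq hge hgo c d
    rw [Nat.odd_iff] at ha
    rcases Nat.even_or_odd b with hb | hb
    · rw [Nat.even_iff] at hb
      obtain ⟨h₁, h₂⟩ : c / 2 = a / 2 ∧ d / 2 = b / 2 :=
        interleave_injective hge hgo (by omega)
      omega
    · rw [Nat.odd_iff] at hb
      have hsucc : interleave g (c / 2) (d / 2) = interleave g (a / 2) (b / 2) + 1 := by omega
      rcases Nat.even_or_odd (a / 2) with ha₂ | ha₂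
      · have := interleave_eq_succ_of_even hge hgo ha₂ hsucc
        omega
      · have := ih (a / 2) (by omega) ha₂ hsucc
        omega

theorem prec_of_interleave_eq_add_two {a b c d : ℕ} (hb : Odd b)
    (h : interleave g c d = interleave g a b + 2) : prec c d a (b + 1) := by
  have hab := interleave_eq hge hgo a b
  have hcd := interleave_eq hge hgo c d
  rw [Nat.odd_iff] at hb
  have hsucc : interleave g (c / 2) (d / 2) = interleave g (a / 2) (b / 2) + 1 := by omega
  unfold prec
  rcases Nat.even_or_odd (a / 2) with ha₂ | ha₂
  · have := interleave_eq_succ_of_even hge hgo ha₂ hsucc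
    omega
  · have := add_le_add_of_interleave_eq_succ_of_odd hge hgo ha₂ hsucc
    omega

theorem prec_of_interleave_eq_add_two_mul_four_pow (e : ℕ) {a b c d : ℕ}
    (hb : Odd (b / 2 ^ e)) (h : interleave g c d = interleave g a b + 2 * 4 ^ e) :
    prec c d a (b + 2 ^ e) := by
  induction e generalizing a b c d with
  | zero =>
    simpa using prec_of_interleave_eq_add_two hge hgo (by simpa using hb) (by simpa using h)
  | succ e ih =>
    have hab := interleave_eq hge hgo a b
    have hcd := interleave_eq hge hgo c d
    rw [pow_succ] at h
    have hhalf : interleave g (c / 2) (d / 2) = interleave g (a / 2) (b / 2) + 2 * 4 ^ e := by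
      omega
    have hb₂ : Odd (b / 2 / 2 ^ e) := by rwa [Nat.div_div_eq_div_mul, ← pow_succ']
    have hpow : 2 ^ (e + 1) = 2 * 2 ^ e := pow_succ' 2 e
    convert prec_two_mul_add (ih hb₂ hhalf) (a % 2) (b % 2) using 1 <;> omega

end Interleave

theorem stmt_7_general (g : ℕ → ℕ)
    (hge : ∀ n, g (2 * n) = 4 * g n)
    (hgo : ∀ n, g (2 * n + 1) = g (2 * n) + 1)
    (q : ℕ) (hq : ∃ e : ℕ, q = 2 ^ e)
    (a b : ℕ) (hb : Odd (b / q))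
    (c d : ℕ) (hcd : 1 + 2 * g c + 4 * g d = (1 + 2 * g a + 4 * g b) + 4 * q ^ 2) :
    prec c d a (b + q) := by
  obtain ⟨e, rfl⟩ := hq
  refine prec_of_interleave_eq_add_two_mul_four_pow hge hgo e hb ?_
  have hq2 : (2 ^ e) ^ 2 = 4 ^ e := by rw [← pow_mul, mul_comm, pow_mul]; norm_num
  unfold interleave
  omega

theorem stmt_7 (g : ℕ → ℕ) (hg0 : g 0 = 0)
    (hge : ∀ n, g (2 * n) = 4 * g n)
    (hgo : ∀ n, g (2 * n + 1) = g (2 * n) + 1)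
    (q : ℕ) (hq : ∃ e : ℕ, q = 2 ^ e)
    (a b : ℕ) (hb : Odd (b / q))
    (c d : ℕ) (hcd : 1 + 2 * g c + 4 * g d = (1 + 2 * g a + 4 * g b) + 4 * q ^ 2) :
    prec c d a (b + q) :=
  stmt_7_general g hge hgo q hq a b hb c d hcd
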